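/- The inner translations K6 and K8 are equivalent in minimal logic: ML ⊢ A^{K6} ↔ A^{K8} for every formula A, where K8 translates (A→B) to ¬(A^{K8} ∧ ¬B^{K8}). -/
import Mathlib


/-- First-order formulas over domain `α`, with HOAS quantifiers.
`bot` is an ordinary atom with no special rules in minimal logic. -/
inductive Formula (α : Type) : Type where
  | atom : ℕ → List α → Formula α
  | bot : Formula α
  | and : Formula α → Formula α → Formula α
  | or : Formula α → Formula α → Formula α
  | imp : Formula α → Formula α → Formula α
  | all : (α → Formula α) → Formula α
  | ex : (α → Formula α) → Formula α

/-- Negation: `¬A ≡ A → ⊥`. -/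
def Formula.neg {α : Type} (A : Formula α) : Formula α := A.imp .bot

/-- Biconditional. -/
def Formula.iff {α : Type} (A B : Formula α) : Formula α := (A.imp B).and (B.imp A)

/-- Minimal first-order logic: natural deduction without ex falso quodlibet. -/
inductive ML {α : Type} : Set (Formula α) → Formula α → Prop where
  | ax {Γ : Set (Formula α)} {A : Formula α} : A ∈ Γ → ML Γ A
  | impI {Γ : Set (Formula α)} {A B : Formula α} : ML (insert A Γ) B → ML Γ (A.imp B)
  | impE {Γ : Set (Formula α)} {A B : Formula α} : ML Γ (A.imp B) → ML Γ A → ML Γ B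
  | andI {Γ : Set (Formula α)} {A B : Formula α} : ML Γ A → ML Γ B → ML Γ (A.and B)
  | andE1 {Γ : Set (Formula α)} {A B : Formula α} : ML Γ (A.and B) → ML Γ A
  | andE2 {Γ : Set (Formula α)} {A B : Formula α} : ML Γ (A.and B) → ML Γ B
  | orI1 {Γ : Set (Formula α)} {A B : Formula α} : ML Γ A → ML Γ (A.or B)
  | orI2 {Γ : Set (Formula α)} {A B : Formula α} : ML Γ B → ML Γ (A.or B)
  | orE {Γ : Set (Formula α)} {A B C : Formula α} : ML Γ (A.or B) → ML (insert A Γ) C → ML (insert B Γ) C → ML Γ C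
  | allI {Γ : Set (Formula α)} {f : α → Formula α} : (∀ a, ML Γ (f a)) → ML Γ (.all f)
  | allE {Γ f} (a : α) : ML Γ (.all f) → ML Γ (f a)
  | exI {Γ f} (a : α) : ML Γ (f a) → ML Γ (.ex f)
  | exE {Γ : Set (Formula α)} {f : α → Formula α} {C : Formula α} : ML Γ (.ex f) → (∀ a, ML (insert (f a) Γ) C) → ML Γ C

/-- Intuitionistic first-order logic: minimal logic plus ex falso quodlibet. -/
inductive IL {α : Type} : Set (Formula α) → Formula α → Prop where
  | ax {Γ : Set (Formula α)} {A : Formula α} : A ∈ Γ → IL Γ A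
  | impI {Γ : Set (Formula α)} {A B : Formula α} : IL (insert A Γ) B → IL Γ (A.imp B)
  | impE {Γ : Set (Formula α)} {A B : Formula α} : IL Γ (A.imp B) → IL Γ A → IL Γ B
  | andI {Γ : Set (Formula α)} {A B : Formula α} : IL Γ A → IL Γ B → IL Γ (A.and B)
  | andE1 {Γ : Set (Formula α)} {A B : Formula α} : IL Γ (A.and B) → IL Γ A
  | andE2 {Γ : Set (Formula α)} {A B : Formula α} : IL Γ (A.and B) → IL Γ B
  | orI1 {Γ : Set (Formula α)} {A B : Formula α} : IL Γ A → IL Γ (A.or B)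
  | orI2 {Γ : Set (Formula α)} {A B : Formula α} : IL Γ B → IL Γ (A.or B)
  | orE {Γ : Set (Formula α)} {A B C : Formula α} : IL Γ (A.or B) → IL (insert A Γ) C → IL (insert B Γ) C → IL Γ C
  | allI {Γ : Set (Formula α)} {f : α → Formula α} : (∀ a, IL Γ (f a)) → IL Γ (.all f)
  | allE {Γ f} (a : α) : IL Γ (.all f) → IL Γ (f a)
  | exI {Γ f} (a : α) : IL Γ (f a) → IL Γ (.ex f)
  | exE {Γ : Set (Formula α)} {f : α → Formula α} {C : Formula α} : IL Γ (.ex f) → (∀ a, IL (insert (f a) Γ) C) → IL Γ C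
  | efq {Γ : Set (Formula α)} {A : Formula α} : IL Γ .bot → IL Γ A

/-- Classical first-order logic: minimal logic plus double negation elimination. -/
inductive CL {α : Type} : Set (Formula α) → Formula α → Prop where
  | ax {Γ : Set (Formula α)} {A : Formula α} : A ∈ Γ → CL Γ A
  | impI {Γ : Set (Formula α)} {A B : Formula α} : CL (insert A Γ) B → CL Γ (A.imp B)
  | impE {Γ : Set (Formula α)} {A B : Formula α} : CL Γ (A.imp B) → CL Γ A → CL Γ B
  | andI {Γ : Set (Formula α)} {A B : Formula α} : CL Γ A → CL Γ B → CL Γ (A.and B)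
  | andE1 {Γ : Set (Formula α)} {A B : Formula α} : CL Γ (A.and B) → CL Γ A
  | andE2 {Γ : Set (Formula α)} {A B : Formula α} : CL Γ (A.and B) → CL Γ B
  | orI1 {Γ : Set (Formula α)} {A B : Formula α} : CL Γ A → CL Γ (A.or B)
  | orI2 {Γ : Set (Formula α)} {A B : Formula α} : CL Γ B → CL Γ (A.or B)
  | orE {Γ : Set (Formula α)} {A B C : Formula α} : CL Γ (A.or B) → CL (insert A Γ) C → CL (insert B Γ) C → CL Γ C
  | allI {Γ : Set (Formula α)} {f : α → Formula α} : (∀ a, CL Γ (f a)) → CL Γ (.all f)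
  | allE {Γ f} (a : α) : CL Γ (.all f) → CL Γ (f a)
  | exI {Γ f} (a : α) : CL Γ (f a) → CL Γ (.ex f)
  | exE {Γ : Set (Formula α)} {f : α → Formula α} {C : Formula α} : CL Γ (.ex f) → (∀ a, CL (insert (f a) Γ) C) → CL Γ C
  | dne {Γ : Set (Formula α)} {A : Formula α} : CL Γ A.neg.neg → CL Γ A

/-- Inner translation of K6: `(A → B)` goes to `A^{K6} → ¬¬B^{K6}`, otherwise as Kuroda. -/
def kurodaSix {α : Type} : Formula α → Formula α
  | .atom n ts => Formula.atom n ts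
  | .bot => Formula.bot
  | .and A B => (kurodaSix A).and (kurodaSix B)
  | .or A B => (kurodaSix A).or (kurodaSix B)
  | .imp A B => (kurodaSix A).imp (kurodaSix B).neg.neg
  | .all f => .all (fun a => (kurodaSix (f a)).neg.neg)
  | .ex f => .ex (fun a => kurodaSix (f a))

/-- Inner translation of K8: `(A → B)` goes to `¬(A^{K8} ∧ ¬B^{K8})`, otherwise as Kuroda. -/
def kurodaEight {α : Type} : Formula α → Formula α
  | .atom n ts => Formula.atom n ts
  | .bot => Formula.bot
  | .and A B => (kurodaEight A).and (kurodaEight B)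
  | .or A B => (kurodaEight A).or (kurodaEight B)
  | .imp A B => ((kurodaEight A).and (kurodaEight B).neg).neg
  | .all f => .all (fun a => (kurodaEight (f a)).neg.neg)
  | .ex f => .ex (fun a => kurodaEight (f a))


namespace MLTools

open Formula

theorem ML.weaken {α : Type} {Γ Γ' : Set (Formula α)} {A : Formula α}
    (h : ML Γ A) (hs : Γ ⊆ Γ') : ML Γ' A := by
  induction h generalizing Γ' with
  | ax hm => exact ML.ax (hs hm)
  | impI _ ih => exact ML.impI (ih (Set.insert_subset_insert hs))
  | impE _ _ ih1 ih2 => exact ML.impE (ih1 hs) (ih2 hs)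
  | andI _ _ ih1 ih2 => exact ML.andI (ih1 hs) (ih2 hs)
  | andE1 _ ih => exact ML.andE1 (ih hs)
  | andE2 _ ih => exact ML.andE2 (ih hs)
  | orI1 _ ih => exact ML.orI1 (ih hs)
  | orI2 _ ih => exact ML.orI2 (ih hs)
  | orE _ _ _ ih ih1 ih2 =>
      exact ML.orE (ih hs) (ih1 (Set.insert_subset_insert hs))
        (ih2 (Set.insert_subset_insert hs))
  | allI _ ih => exact ML.allI (fun a => ih a hs)
  | allE a _ ih => exact ML.allE a (ih hs)
  | exI a _ ih => exact ML.exI a (ih hs)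
  | exE _ _ ih ihs =>
      exact ML.exE (ih hs) (fun a => ihs a (Set.insert_subset_insert hs))

theorem hyp0 {α : Type} {Γ : Set (Formula α)} {A : Formula α} :
    ML (insert A Γ) A := ML.ax (Set.mem_insert _ _)

theorem hyp1 {α : Type} {Γ : Set (Formula α)} {A B : Formula α} :
    ML (insert B (insert A Γ)) A :=
  ML.ax (Set.mem_insert_of_mem _ (Set.mem_insert _ _))

theorem hyp2 {α : Type} {Γ : Set (Formula α)} {A B C : Formula α} :
    ML (insert C (insert B (insert A Γ))) A :=
  ML.ax (Set.mem_insert_of_mem _ (Set.mem_insert_of_mem _ (Set.mem_insert _ _)))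

theorem wk {α : Type} {Γ : Set (Formula α)} {A B : Formula α}
    (h : ML Γ A) : ML (insert B Γ) A := ML.weaken h (Set.subset_insert _ _)

theorem iffI {α : Type} {Γ : Set (Formula α)} {A B : Formula α}
    (h1 : ML (insert A Γ) B) (h2 : ML (insert B Γ) A) :
    ML Γ (A.iff B) := ML.andI (ML.impI h1) (ML.impI h2)

theorem iff_mp {α : Type} {Γ : Set (Formula α)} {A B : Formula α}
    (h : ML Γ (A.iff B)) (ha : ML Γ A) : ML Γ B := ML.impE (ML.andE1 h) ha

theorem iff_mpr {α : Type} {Γ : Set (Formula α)} {A B : Formula α}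
    (h : ML Γ (A.iff B)) (hb : ML Γ B) : ML Γ A := ML.impE (ML.andE2 h) hb

theorem iff_refl {α : Type} {Γ : Set (Formula α)} {A : Formula α} :
    ML Γ (A.iff A) := iffI hyp0 hyp0

theorem iff_trans {α : Type} {Γ : Set (Formula α)} {A B C : Formula α}
    (h1 : ML Γ (A.iff B)) (h2 : ML Γ (B.iff C)) : ML Γ (A.iff C) :=
  iffI (iff_mp (wk h2) (iff_mp (wk h1) hyp0))
    (iff_mpr (wk h1) (iff_mpr (wk h2) hyp0))

theorem and_cong {α : Type} {Γ : Set (Formula α)} {A A' B B' : Formula α}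
    (hA : ML Γ (A.iff A')) (hB : ML Γ (B.iff B')) :
    ML Γ ((A.and B).iff (A'.and B')) :=
  iffI
    (ML.andI (iff_mp (wk hA) (ML.andE1 hyp0)) (iff_mp (wk hB) (ML.andE2 hyp0)))
    (ML.andI (iff_mpr (wk hA) (ML.andE1 hyp0)) (iff_mpr (wk hB) (ML.andE2 hyp0)))

theorem or_cong {α : Type} {Γ : Set (Formula α)} {A A' B B' : Formula α}
    (hA : ML Γ (A.iff A')) (hB : ML Γ (B.iff B')) :
    ML Γ ((A.or B).iff (A'.or B')) :=
  iffI
    (ML.orE hyp0 (ML.orI1 (iff_mp (wk (wk hA)) hyp0))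
      (ML.orI2 (iff_mp (wk (wk hB)) hyp0)))
    (ML.orE hyp0 (ML.orI1 (iff_mpr (wk (wk hA)) hyp0))
      (ML.orI2 (iff_mpr (wk (wk hB)) hyp0)))

theorem imp_cong {α : Type} {Γ : Set (Formula α)} {A A' B B' : Formula α}
    (hA : ML Γ (A.iff A')) (hB : ML Γ (B.iff B')) :
    ML Γ ((A.imp B).iff (A'.imp B')) :=
  iffI
    (ML.impI (iff_mp (wk (wk hB))
      (ML.impE hyp1 (iff_mpr (wk (wk hA)) hyp0))))
    (ML.impI (iff_mpr (wk (wk hB))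
      (ML.impE hyp1 (iff_mp (wk (wk hA)) hyp0))))

theorem neg_cong {α : Type} {Γ : Set (Formula α)} {A A' : Formula α}
    (hA : ML Γ (A.iff A')) : ML Γ (A.neg.iff A'.neg) :=
  imp_cong hA iff_refl

theorem all_cong {α : Type} {Γ : Set (Formula α)} {f g : α → Formula α}
    (h : ∀ a, ML Γ ((f a).iff (g a))) :
    ML Γ ((Formula.all f).iff (Formula.all g)) :=
  iffI
    (ML.allI (fun a => iff_mp (wk (h a)) (ML.allE a hyp0)))
    (ML.allI (fun a => iff_mpr (wk (h a)) (ML.allE a hyp0)))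

theorem ex_cong {α : Type} {Γ : Set (Formula α)} {f g : α → Formula α}
    (h : ∀ a, ML Γ ((f a).iff (g a))) :
    ML Γ ((Formula.ex f).iff (Formula.ex g)) :=
  iffI
    (ML.exE hyp0 (fun a => ML.exI a (iff_mp (wk (wk (h a))) hyp0)))
    (ML.exE hyp0 (fun a => ML.exI a (iff_mpr (wk (wk (h a))) hyp0)))

/-- Key fact: `(A → ¬¬B) ↔ ¬(A ∧ ¬B)` in minimal logic. -/
theorem key {α : Type} {Γ : Set (Formula α)} {A B : Formula α} :
    ML Γ ((A.imp B.neg.neg).iff ((A.and B.neg).neg)) :=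
  iffI
    (ML.impI (ML.impE
      (ML.impE hyp1 (ML.andE1 hyp0))
      (ML.andE2 hyp0)))
    (ML.impI (ML.impI
      (ML.impE hyp2 (ML.andI hyp1 hyp0))))

end MLTools

/-- `ML ⊢ A^{K6} ↔ A^{K8}` for every formula `A`. -/
theorem kurodaSix_iff_kurodaEight {α : Type} (A : Formula α) :
    ML (∅ : Set (Formula α)) ((kurodaSix A).iff (kurodaEight A)) := by
  open MLTools in
  induction A with
  | atom n ts => exact MLTools.iff_refl
  | bot => exact MLTools.iff_refl
  | and A B ihA ihB => exact MLTools.and_cong ihA ihB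
  | or A B ihA ihB => exact MLTools.or_cong ihA ihB
  | imp A B ihA ihB =>
      exact MLTools.iff_trans
        (MLTools.imp_cong ihA (MLTools.neg_cong (MLTools.neg_cong ihB)))
        MLTools.key
  | all f ih =>
      exact MLTools.all_cong
        (fun a => MLTools.neg_cong (MLTools.neg_cong (ih a)))
  | ex f ih => exact MLTools.ex_cong ih
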